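/- arXiv:1511.04685 — 2 statements merged into one kernel-verified Lean document; each statement's English description precedes it below -/
import Mathlib

section
/- If (u, v) satisfy the linearity-in-the-subdifferential (LIS) property for a convex one-homogeneous functional J, then ⟨u, p(v)⟩ = 0 for the corresponding subgradient p(v), i.e. the pair is fully orthogonal. -/
open RealInnerProductSpace

section Aux
variable {X : Type*} [NormedAddCommGroup X] [InnerProductSpace ℝ X] {J : X → ℝ}

private lemma lis_subadd (hconv : ConvexOn ℝ Set.univ J)
    (hhom : ∀ (α : ℝ) (u : X), J (α • u) = |α| * J u) (a b : X) :
    J (a + b) ≤ J a + J b := by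
  have h1 : J ((1/2:ℝ) • a + (1/2:ℝ) • b) ≤ (1/2) * J a + (1/2) * J b :=
    hconv.2 (Set.mem_univ a) (Set.mem_univ b) (by norm_num) (by norm_num) (by norm_num)
  have h2 : (2:ℝ) • ((1/2:ℝ) • a + (1/2:ℝ) • b) = a + b := by module
  have h3 := hhom 2 ((1/2:ℝ) • a + (1/2:ℝ) • b)
  rw [h2] at h3
  rw [h3]
  norm_num
  linarith

private lemma lis_bound (hconv : ConvexOn ℝ Set.univ J)
    (hhom : ∀ (α : ℝ) (u : X), J (α • u) = |α| * J u)
    {z p : X} (hp : ∀ w, J w - J z ≥ ⟪p, w - z⟫) (x : X) :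
    ⟪p, x⟫ ≤ J x := by
  have h := hp (z + x)
  rw [add_sub_cancel_left] at h
  have := lis_subadd hconv hhom z x
  linarith

private lemma lis_eq (hhom : ∀ (α : ℝ) (u : X), J (α • u) = |α| * J u)
    {z p : X} (hp : ∀ w, J w - J z ≥ ⟪p, w - z⟫) :
    ⟪p, z⟫ = J z := by
  have h1 := hp (z + z)
  rw [add_sub_cancel_left] at h1
  have h2 : J (z + z) = 2 * J z := by
    have := hhom 2 z; rw [two_smul] at this; rw [this]; norm_num
  have h3 := hp 0
  rw [zero_sub, inner_neg_right] at h3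
  have h0 : J (0 : X) = 0 := by
    have := hhom 0 (0 : X); rwa [zero_smul, abs_zero, zero_mul] at this
  rw [h0] at h3
  linarith

private lemma lis_of_bound_eq {z p : X}
    (hA : ∀ x, ⟪p, x⟫ ≤ J x) (hB : ⟪p, z⟫ = J z) :
    ∀ w, J w - J z ≥ ⟪p, w - z⟫ := by
  intro w
  rw [inner_sub_right, hB]
  have := hA w
  linarith

private lemma lis_combine {v u : X} {p q : X}
    (hp : ∀ w, J w - J v ≥ ⟪p, w - v⟫) (hq : ∀ w, J w - J v ≥ ⟪q, w - v⟫)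
    (ha : ⟪p, u⟫ ≤ 0) (hb : 0 ≤ ⟪q, u⟫) :
    ∃ r : X, (∀ w, J w - J v ≥ ⟪r, w - v⟫) ∧ ⟪u, r⟫ = 0 := by
  by_cases h : ⟪q, u⟫ - ⟪p, u⟫ = 0
  · refine ⟨p, hp, ?_⟩
    rw [real_inner_comm]
    linarith
  · have hba : 0 < ⟪q, u⟫ - ⟪p, u⟫ := lt_of_le_of_ne (by linarith) (Ne.symm h)
    have hθ0 : 0 ≤ ⟪q, u⟫ / (⟪q, u⟫ - ⟪p, u⟫) := div_nonneg hb (le_of_lt hba)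
    have hθ1 : 0 ≤ 1 - ⟪q, u⟫ / (⟪q, u⟫ - ⟪p, u⟫) := by
      rw [sub_nonneg, div_le_one hba]
      linarith
    refine ⟨(⟪q, u⟫ / (⟪q, u⟫ - ⟪p, u⟫)) • p + (1 - ⟪q, u⟫ / (⟪q, u⟫ - ⟪p, u⟫)) • q, ?_, ?_⟩
    · intro w
      have h1 := hp w
      have h2 := hq w
      rw [inner_add_left, real_inner_smul_left, real_inner_smul_left]
      nlinarith [mul_le_mul_of_nonneg_left h1 hθ0, mul_le_mul_of_nonneg_left h2 hθ1]
    · have key : ∀ a b : ℝ, b - a ≠ 0 → b / (b - a) * a + (1 - b / (b - a)) * b = 0 := by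
        intro a b hab
        field_simp
        ring
      rw [inner_add_right, real_inner_smul_right, real_inner_smul_right,
        real_inner_comm u p, real_inner_comm u q]
      exact key _ _ (fun e => h (by rw [real_inner_comm q u, real_inner_comm p u] at e; exact e))

end Aux

/-- (LIS) implies full orthogonality: there exist subgradients p(v) ∈ ∂J(v) and
p(u) ∈ ∂J(u) with ⟨u, p(v)⟩ = 0 and ⟨v, p(u)⟩ = 0. -/
theorem lis_implies_fully_orthogonal {X : Type*} [NormedAddCommGroup X]
    [InnerProductSpace ℝ X] [CompleteSpace X] (J : X → ℝ)
    (hconv : ConvexOn ℝ Set.univ J)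
    (hhom : ∀ (α : ℝ) (u : X), J (α • u) = |α| * J u)
    (u v : X)
    (hLIS : ∀ α₁ α₂ : ℝ, α₁ ≠ 0 → α₂ ≠ 0 →
      ∃ p1 p2 p12 : X,
        (∀ w, J w - J (α₁ • u) ≥ ⟪p1, w - α₁ • u⟫) ∧
        (∀ w, J w - J (α₂ • v) ≥ ⟪p2, w - α₂ • v⟫) ∧
        (∀ w, J w - J (α₁ • u + α₂ • v) ≥ ⟪p12, w - (α₁ • u + α₂ • v)⟫) ∧
        p12 = p1 + p2) :
    (∃ pv : X, (∀ w, J w - J v ≥ ⟪pv, w - v⟫) ∧ ⟪u, pv⟫ = 0) ∧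
    (∃ pu : X, (∀ w, J w - J u ≥ ⟪pu, w - u⟫) ∧ ⟪v, pu⟫ = 0) := by
  have hJneg : ∀ x : X, J (-x) = J x := by
    intro x
    have := hhom (-1) x
    rwa [neg_one_smul, abs_neg, abs_one, one_mul] at this
  -- (1, 1)
  obtain ⟨p1, p2, p12, hp1, hp2, hp12, hpsum⟩ := hLIS 1 1 one_ne_zero one_ne_zero
  simp only [one_smul] at hp1 hp2 hp12
  -- (1, -1)
  obtain ⟨q1, q2, q12, hq1, hq2, hq12, hqsum⟩ := hLIS 1 (-1) one_ne_zero (by norm_num)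
  simp only [one_smul, neg_one_smul] at hq1 hq2 hq12
  -- (-1, 1)
  obtain ⟨r1, r2, r12, hr1, hr2, hr12, hrsum⟩ := hLIS (-1) 1 (by norm_num) one_ne_zero
  simp only [one_smul, neg_one_smul] at hr1 hr2 hr12
  constructor
  · -- pv : combine p2 (⟪p2,u⟫ ≤ 0) and -q2 (⟪-q2,u⟫ ≥ 0)
    have hp2u : ⟪p2, u⟫ ≤ 0 := by
      have h1 : ⟪p12, u⟫ ≤ J u := lis_bound hconv hhom hp12 u
      have h2 : ⟪p1, u⟫ = J u := lis_eq hhom hp1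
      rw [hpsum, inner_add_left] at h1
      linarith
    have hq2u : ⟪q2, u⟫ ≤ 0 := by
      have h1 : ⟪q12, u⟫ ≤ J u := lis_bound hconv hhom hq12 u
      have h2 : ⟪q1, u⟫ = J u := lis_eq hhom hq1
      rw [hqsum, inner_add_left] at h1
      linarith
    -- -q2 ∈ ∂J(v)
    have hnq2 : ∀ w, J w - J v ≥ ⟪-q2, w - v⟫ := by
      apply lis_of_bound_eq
      · intro x
        have := lis_bound hconv hhom hq2 (-x)
        rw [← inner_neg_neg, neg_neg, hJneg] at this
        exact this
      · have h := lis_eq hhom hq2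
        rw [hJneg, inner_neg_right] at h
        rw [inner_neg_left]
        exact h
    exact lis_combine hp2 hnq2 hp2u (by rw [inner_neg_left]; linarith)
  · -- pu : combine p1 (⟪p1,v⟫ ≤ 0) and -r1 (⟪-r1,v⟫ ≥ 0)
    have hp1v : ⟪p1, v⟫ ≤ 0 := by
      have h1 : ⟪p12, v⟫ ≤ J v := lis_bound hconv hhom hp12 v
      have h2 : ⟪p2, v⟫ = J v := lis_eq hhom hp2
      rw [hpsum, inner_add_left] at h1
      linarith
    have hr1v : ⟪r1, v⟫ ≤ 0 := by
      have h1 : ⟪r12, v⟫ ≤ J v := lis_bound hconv hhom hr12 v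
      have h2 : ⟪r2, v⟫ = J v := lis_eq hhom hr2
      rw [hrsum, inner_add_left] at h1
      linarith
    have hnr1 : ∀ w, J w - J u ≥ ⟪-r1, w - u⟫ := by
      apply lis_of_bound_eq
      · intro x
        have := lis_bound hconv hhom hr1 (-x)
        rw [← inner_neg_neg, neg_neg, hJneg] at this
        exact this
      · have h := lis_eq hhom hr1
        rw [hJneg, inner_neg_right] at h
        rw [inner_neg_left]
        exact h
    exact lis_combine hp1 hnr1 hp1v (by rw [inner_neg_left]; linarith)
end

section
/- If (u, v) are independent (fully orthogonal and LIS) with respect to a convex one-homogeneous functional J, then the triangle inequality is attained: J(u + v) = J(u) + J(v). -/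
open RealInnerProductSpace

lemma subgrad_eq_inner {X : Type*} [NormedAddCommGroup X]
    [InnerProductSpace ℝ X] (J : X → ℝ)
    (hhom : ∀ (α : ℝ) (u : X), J (α • u) = |α| * J u)
    (w p : X) (hp : ∀ z, J z - J w ≥ ⟪p, z - w⟫) :
    J w = ⟪p, w⟫ := by
  have h0 : J 0 = 0 := by
    have := hhom 0 w; simpa using this
  have h1 := hp 0
  have h2 := hp ((2 : ℝ) • w)
  have h2' : J ((2 : ℝ) • w) = 2 * J w := by
    have := hhom 2 w; norm_num at this; exact this
  rw [h2'] at h2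
  have e1 : ⟪p, (0 : X) - w⟫ = -⟪p, w⟫ := by simp
  have e2 : ⟪p, (2 : ℝ) • w - w⟫ = ⟪p, w⟫ := by
    rw [inner_sub_right, real_inner_smul_right]; ring
  rw [h0, e1] at h1
  rw [e2] at h2
  linarith

/-- Independent functions attain equality in the triangle inequality:
J(u+v) = J(u) + J(v). -/
theorem independent_triangle_equality {X : Type*} [NormedAddCommGroup X]
    [InnerProductSpace ℝ X] [CompleteSpace X] (J : X → ℝ)
    (hconv : ConvexOn ℝ Set.univ J)
    (hhom : ∀ (α : ℝ) (u : X), J (α • u) = |α| * J u)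
    (u v pu pv : X)
    (hpu : ∀ w, J w - J u ≥ ⟪pu, w - u⟫)
    (hpv : ∀ w, J w - J v ≥ ⟪pv, w - v⟫)
    (hLIS : ∀ w, J w - J (u + v) ≥ ⟪pu + pv, w - (u + v)⟫)
    (hFO1 : ⟪u, pv⟫ = 0) (hFO2 : ⟪v, pu⟫ = 0) :
    J (u + v) = J u + J v := by
  have hu := subgrad_eq_inner J hhom u pu hpu
  have hv := subgrad_eq_inner J hhom v pv hpv
  have huv := subgrad_eq_inner J hhom (u + v) (pu + pv) hLIS
  have h1 : ⟪pv, u⟫ = 0 := by rw [real_inner_comm]; exact hFO1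
  have h2 : ⟪pu, v⟫ = 0 := by rw [real_inner_comm]; exact hFO2
  rw [huv, hu, hv, inner_add_left, inner_add_right, inner_add_right, h1, h2]
  ring
end
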